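/- arXiv:2307.08594 — 2 statements merged into one kernel-verified Lean document; each statement's English description precedes it below -/
import Mathlib

section
/- With X_(0) = −∞, X_(n+1) = +∞, and ℓ̂, û defined via binomial tail probabilities as ℓ̂ = sup{i : 0 ≤ i ≤ n, P(B(n,p) < i) ≤ α₁} and û = sup{j : 1 ≤ j ≤ n+1, P(B(n,p) > j) ≤ α₂} (for distinct sample values), the interval [X_(ℓ̂), X_(û)] of order statistics covers the p-th quantile θ_p of F with probability at least 1 − α₁ − α₂. -/
open MeasureTheory Set Finset


noncomputable def binomTail (n m : ℕ) (t : ℝ) : ℝ :=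
  ∑ k ∈ Finset.Icc m n, (n.choose k : ℝ) * t ^ k * (1 - t) ^ (n - k)

lemma binom_sum_one (n : ℕ) (t : ℝ) :
    ∑ k ∈ Finset.range (n+1), (n.choose k : ℝ) * t ^ k * (1 - t) ^ (n - k) = 1 := by
  have h := add_pow t (1 - t) n
  simp only [add_sub_cancel, one_pow] at h
  calc ∑ k ∈ Finset.range (n+1), (n.choose k : ℝ) * t ^ k * (1 - t) ^ (n - k)
      = ∑ k ∈ Finset.range (n+1), t ^ k * (1 - t) ^ (n - k) * (n.choose k : ℝ) :=
        Finset.sum_congr rfl fun k _ => by ring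
    _ = 1 := h.symm

lemma binomTail_zero (n : ℕ) (t : ℝ) : binomTail n 0 t = 1 := by
  rw [binomTail, show Finset.Icc 0 n = Finset.range (n+1) by
    ext x; simp [Nat.lt_succ_iff]]
  exact binom_sum_one n t

lemma binomTail_succ (n m : ℕ) (t : ℝ) :
    binomTail (n+1) (m+1) t = (1 - t) * binomTail n (m+1) t + t * binomTail n m t := by
  unfold binomTail
  have h1 : ∀ k ∈ Finset.Icc (m+1) (n+1), ((n+1).choose k : ℝ) * t ^ k * (1 - t) ^ (n+1 - k)
      = (n.choose k : ℝ) * t ^ k * (1 - t) ^ (n+1-k)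
        + (n.choose (k-1) : ℝ) * t ^ k * (1 - t) ^ (n+1-k) := by
    intro k hk
    simp only [Finset.mem_Icc] at hk
    obtain ⟨hk1, _⟩ := hk
    obtain ⟨j, rfl⟩ : ∃ j, k = j + 1 := ⟨k - 1, by omega⟩
    rw [Nat.choose_succ_succ']
    push_cast
    ring
  rw [Finset.sum_congr rfl h1, Finset.sum_add_distrib]
  congr 1
  · rw [Finset.mul_sum]
    rcases le_or_gt (m+1) (n+1) with hmn | hmn
    · rw [show Finset.Icc (m+1) (n+1) = insert (n+1) (Finset.Icc (m+1) n) by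
        ext x; simp only [Finset.mem_Icc, Finset.mem_insert]; omega]
      rw [Finset.sum_insert (by simp)]
      simp only [Nat.choose_succ_self, Nat.cast_zero, zero_mul, zero_add]
      refine Finset.sum_congr rfl fun k hk => ?_
      simp only [Finset.mem_Icc] at hk
      rw [show n + 1 - k = (n - k) + 1 by omega]
      ring
    · rw [Finset.Icc_eq_empty (by omega), Finset.Icc_eq_empty (by omega)]
      simp
  · rw [Finset.mul_sum]
    rw [show Finset.Icc (m+1) (n+1)
        = Finset.map ⟨fun x => x + 1, add_left_injective 1⟩ (Finset.Icc m n) by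
      ext x
      simp only [Finset.mem_map, Function.Embedding.coeFn_mk, Finset.mem_Icc]
      constructor
      · rintro ⟨h1, h2⟩; exact ⟨x - 1, ⟨by omega, by omega⟩, by omega⟩
      · rintro ⟨y, ⟨hy1, hy2⟩, rfl⟩; omega]
    rw [Finset.sum_map]
    refine Finset.sum_congr rfl fun k hk => ?_
    simp only [Finset.mem_Icc] at hk
    simp only [Function.Embedding.coeFn_mk, Nat.add_sub_cancel]
    rw [show n + 1 - (k+1) = n - k by omega]
    ring

lemma binomTail_nonneg (n m : ℕ) {t : ℝ} (h0 : 0 ≤ t) (h1 : t ≤ 1) : 0 ≤ binomTail n m t :=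
  Finset.sum_nonneg fun k _ => by
    have h2 : (0:ℝ) ≤ 1 - t := by linarith
    positivity

lemma binomTail_anti (n : ℕ) {m m' : ℕ} (hmm : m ≤ m') {t : ℝ} (h0 : 0 ≤ t) (h1 : t ≤ 1) :
    binomTail n m' t ≤ binomTail n m t := by
  apply Finset.sum_le_sum_of_subset_of_nonneg
  · exact Finset.Icc_subset_Icc_left hmm
  · intro k _ _
    have h2 : (0:ℝ) ≤ 1 - t := by linarith
    positivity

lemma binomTail_mono (n : ℕ) (m : ℕ) {s t : ℝ} (h0 : 0 ≤ s) (hst : s ≤ t) (h1 : t ≤ 1) :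
    binomTail n m s ≤ binomTail n m t := by
  induction n generalizing m with
  | zero =>
    rcases Nat.eq_zero_or_pos m with rfl | hm
    · rw [binomTail_zero, binomTail_zero]
    · unfold binomTail
      rw [Finset.Icc_eq_empty (by omega)]
      simp
  | succ n ih =>
    rcases Nat.eq_zero_or_pos m with rfl | hm
    · rw [binomTail_zero, binomTail_zero]
    · obtain ⟨m, rfl⟩ : ∃ j, m = j + 1 := ⟨m - 1, by omega⟩
      rw [binomTail_succ, binomTail_succ]
      have hs1 : s ≤ 1 := hst.trans h1
      have ht0 : 0 ≤ t := h0.trans hst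
      calc (1 - s) * binomTail n (m+1) s + s * binomTail n m s
          ≤ (1 - t) * binomTail n (m+1) s + t * binomTail n m s := by
            have hd : binomTail n (m+1) s ≤ binomTail n m s :=
              binomTail_anti n (by omega) h0 hs1
            nlinarith [binomTail_nonneg n (m+1) h0 hs1]
        _ ≤ (1 - t) * binomTail n (m+1) t + t * binomTail n m t := by
            gcongr <;> [exact ih (m+1); exact ih m]

lemma binomTail_eq_one_sub (n m : ℕ) (hm : m ≤ n + 1) (t : ℝ) :
    binomTail n m t = 1 - ∑ j ∈ Finset.range m, (n.choose j : ℝ) * t ^ j * (1 - t) ^ (n - j) := by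
  have h := binom_sum_one n t
  rw [← Finset.sum_range_add_sum_Ico _ hm] at h
  rw [binomTail, show Finset.Icc m n = Finset.Ico m (n+1) by
    ext x; simp [Nat.lt_succ_iff]]
  linarith
lemma prob_count_ge {Ω : Type*} [MeasureSpace Ω] [IsProbabilityMeasure (volume : Measure Ω)]
    (n : ℕ) (Y : Fin n → Ω → Bool) (hYmeas : ∀ i, Measurable (Y i))
    (hYindep : ProbabilityTheory.iIndepFun Y volume)
    (q : ENNReal) (hq : ∀ i, volume {ω | Y i ω = true} = q) (m : ℕ) :
    volume {ω | m ≤ (Finset.univ.filter (fun i => Y i ω = true)).card}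
      = ∑ k ∈ Finset.Icc m n, (n.choose k : ENNReal) * q ^ k * (1 - q) ^ (n - k) := by
  classical
  set E : Finset (Fin n) → Set Ω :=
    fun S => ⋂ i, Y i ⁻¹' (if i ∈ S then ({true} : Set Bool) else {false}) with hE
  have hmemE : ∀ (S : Finset (Fin n)) (ω : Ω),
      ω ∈ E S ↔ (Finset.univ.filter (fun i => Y i ω = true)) = S := by
    intro S ω
    simp only [hE, Set.mem_iInter, Set.mem_preimage]
    constructor
    · intro h
      ext i
      have := h i
      simp only [Finset.mem_filter, Finset.mem_univ, true_and]
      by_cases hi : i ∈ S <;> simp [hi] at this <;> simp [hi, this]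
    · intro h i
      have : i ∈ Finset.univ.filter (fun i => Y i ω = true) ↔ i ∈ S := by rw [h]
      simp only [Finset.mem_filter, Finset.mem_univ, true_and] at this
      by_cases hi : i ∈ S
      · simpa [hi] using this.2 hi
      · simp only [hi, if_false, Set.mem_singleton_iff]
        rcases Bool.eq_false_or_eq_true (Y i ω) with hb | hb
        · exact absurd (this.1 hb) hi
        · exact hb
  have hEmeas : ∀ S, MeasurableSet (E S) := by
    intro S
    exact MeasurableSet.iInter fun i => (hYmeas i) (by
      by_cases hi : i ∈ S <;> simp [hi])
  have hEvol : ∀ S : Finset (Fin n), volume (E S) = q ^ S.card * (1 - q) ^ (n - S.card) := by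
    intro S
    have hEeq : E S = ⋂ i ∈ Finset.univ,
        Y i ⁻¹' (if i ∈ S then ({true} : Set Bool) else {false}) := by
      simp [hE]
    rw [hEeq, hYindep.measure_inter_preimage_eq_mul Finset.univ
      (fun i _ => by by_cases hi : i ∈ S <;> simp [hi])]
    have hfalse : ∀ i : Fin n, volume (Y i ⁻¹' {false}) = 1 - q := by
      intro i
      have hc : (Y i ⁻¹' {false}) = (Y i ⁻¹' {true})ᶜ := by
        ext ω
        simp only [Set.mem_preimage, Set.mem_singleton_iff, Set.mem_compl_iff]
        rcases Bool.eq_false_or_eq_true (Y i ω) with hb | hb <;> simp [hb]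
      rw [hc, measure_compl ((hYmeas i) (measurableSet_singleton _)) (measure_ne_top _ _),
        measure_univ]
      congr 1
      rw [← hq i]; rfl
    have htrue : ∀ i : Fin n, volume (Y i ⁻¹' {true}) = q := by
      intro i; rw [← hq i]; rfl
    calc ∏ i ∈ Finset.univ, volume (Y i ⁻¹' (if i ∈ S then ({true}:Set Bool) else {false}))
        = ∏ i ∈ Finset.univ, (if i ∈ S then q else 1 - q) := by
          refine Finset.prod_congr rfl fun i _ => ?_
          by_cases hi : i ∈ S <;> simp [hi, htrue i, hfalse i]
      _ = q ^ S.card * (1 - q) ^ (n - S.card) := by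
          rw [Finset.prod_ite, Finset.prod_const, Finset.prod_const]
          congr 1
          · congr 1
            simp [Finset.filter_mem_eq_inter]
          · congr 1
            rw [show (Finset.univ.filter (fun i => ¬ i ∈ S)) = Sᶜ by
              ext x; simp]
            simp [Finset.card_compl]
  -- union decomposition
  have hset : {ω : Ω | m ≤ (Finset.univ.filter (fun i => Y i ω = true)).card}
      = ⋃ S ∈ (Finset.univ.powerset.filter (fun S : Finset (Fin n) => m ≤ S.card)), E S := by
    ext ω
    simp only [Set.mem_setOf_eq, Set.mem_iUnion, Finset.mem_filter, Finset.mem_powerset,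
      exists_prop]
    constructor
    · intro h
      exact ⟨Finset.univ.filter (fun i => Y i ω = true),
        ⟨Finset.filter_subset _ _ |>.trans (by simp), h⟩, (hmemE _ ω).2 rfl⟩
    · rintro ⟨S, ⟨-, hcard⟩, hω⟩
      rw [(hmemE S ω).1 hω]
      exact hcard
  have hdisj : (↑(Finset.univ.powerset.filter (fun S : Finset (Fin n) => m ≤ S.card)) :
      Set (Finset (Fin n))).PairwiseDisjoint E := by
    intro S _ S' _ hne
    refine Set.disjoint_left.2 fun ω hS hS' => hne ?_
    rw [← (hmemE S ω).1 hS, ← (hmemE S' ω).1 hS']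
  rw [hset, measure_biUnion_finset hdisj (fun S _ => hEmeas S)]
  -- group by cardinality
  rw [Finset.sum_congr rfl (fun S _ => hEvol S)]
  rw [← Finset.sum_fiberwise_of_maps_to (g := fun S : Finset (Fin n) => S.card)
    (t := Finset.Icc m n) (fun S hS => by
      simp only [Finset.mem_filter, Finset.mem_powerset] at hS
      simp only [Finset.mem_Icc]
      exact ⟨hS.2, (Finset.card_le_card hS.1).trans (by simp)⟩)]
  refine Finset.sum_congr rfl fun k hk => ?_
  simp only [Finset.mem_Icc] at hk
  have hfib : ((Finset.univ.powerset.filter (fun S : Finset (Fin n) => m ≤ S.card)).filter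
      (fun S => S.card = k)) = Finset.powersetCard k (Finset.univ : Finset (Fin n)) := by
    ext S
    simp only [Finset.mem_filter, Finset.mem_powerset, Finset.mem_powersetCard]
    constructor
    · rintro ⟨⟨h1, _⟩, h3⟩; exact ⟨h1, h3⟩
    · rintro ⟨h1, rfl⟩; exact ⟨⟨h1, hk.1⟩, rfl⟩
  rw [hfib]
  have : ∀ S ∈ Finset.powersetCard k (Finset.univ : Finset (Fin n)),
      q ^ S.card * (1 - q) ^ (n - S.card) = q ^ k * (1 - q) ^ (n - k) := by
    intro S hS
    rw [(Finset.mem_powersetCard.1 hS).2]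
  rw [Finset.sum_congr rfl this, Finset.sum_const, Finset.card_powersetCard]
  simp [mul_assoc, Finset.card_univ]
open MeasureTheory Set Finset


/-- Distribution-free confidence interval for the `p`-th quantile via order statistics:
with `X_(0) = −∞`, `X_(n+1) = +∞`, and indices `lhat, uhat` chosen from binomial tail
probabilities, the interval `[X_(lhat), X_(uhat)]` covers `θ_p` with probability at
least `1 − α₁ − α₂`. -/
theorem order_statistics_quantile_coverage
    {Ω : Type*} [MeasureSpace Ω] [IsProbabilityMeasure (volume : Measure Ω)]
    (μ : Measure ℝ) [IsProbabilityMeasure μ]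
    (F : ℝ → ℝ) (hF : ∀ x, F x = (μ (Iic x)).toReal)
    (p : ℝ) (hp : p ∈ Set.Ioo (0:ℝ) 1)
    (θp : ℝ) (hθp : θp = sInf {x : ℝ | p ≤ F x})
    (α₁ α₂ : ℝ) (hα₁ : α₁ ∈ Set.Ico (0:ℝ) 1) (hα₂ : α₂ ∈ Set.Ico (0:ℝ) 1)
    (n : ℕ) (hn : 0 < n) (X : Fin n → Ω → ℝ)
    (hXmeas : ∀ i, Measurable (X i))
    (hXlaw : ∀ i, Measure.map (X i) volume = μ)
    (hXindep : ProbabilityTheory.iIndepFun X volume)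
    -- the sample values are almost surely distinct
    (hdistinct : ∀ᵐ ω ∂(volume : Measure Ω), Function.Injective fun i => X i ω)
    -- `Xord ω` lists the order statistics of the sample `X · ω`
    (Xord : Ω → Fin n → ℝ)
    (hXordMono : ∀ ω, Monotone (Xord ω))
    (hXordPerm : ∀ ω, ∃ σ : Equiv.Perm (Fin n), ∀ i, Xord ω i = X (σ i) ω)
    -- extended order statistics indexed by `0, 1, …, n+1`, with `±∞` endpoints
    (Xe : Ω → ℕ → EReal)
    (hXe0 : ∀ ω, Xe ω 0 = ⊥)
    (hXetop : ∀ ω, Xe ω (n + 1) = ⊤)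
    (hXe : ∀ ω, ∀ i : Fin n, Xe ω (i + 1) = ((Xord ω i : ℝ) : EReal))
    (lhat uhat : ℕ)
    (hl : lhat = sSup {i : ℕ | i ≤ n ∧
        (∑ j ∈ Finset.range i, (n.choose j : ℝ) * p ^ j * (1 - p) ^ (n - j)) ≤ α₁})
    (hu : uhat = sSup {j : ℕ | 1 ≤ j ∧ j ≤ n + 1 ∧
        (∑ k ∈ Finset.Ioc j n, (n.choose k : ℝ) * p ^ k * (1 - p) ^ (n - k)) ≤ α₂}) :
    1 - α₁ - α₂ ≤
      (volume {ω : Ω | Xe ω lhat ≤ ((θp : ℝ) : EReal) ∧ ((θp : ℝ) : EReal) ≤ Xe ω uhat}).toReal := by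
  classical
  obtain ⟨hp0, hp1⟩ := hp
  obtain ⟨hα₁0, hα₁1⟩ := hα₁
  obtain ⟨hα₂0, hα₂1⟩ := hα₂
  -- uhat = n + 1
  have hmemU : n + 1 ∈ {j : ℕ | 1 ≤ j ∧ j ≤ n + 1 ∧
      (∑ k ∈ Finset.Ioc j n, (n.choose k : ℝ) * p ^ k * (1 - p) ^ (n - k)) ≤ α₂} := by
    refine ⟨by omega, le_refl _, ?_⟩
    rw [Finset.Ioc_eq_empty (by omega)]
    simpa using hα₂0
  have hbddU : BddAbove {j : ℕ | 1 ≤ j ∧ j ≤ n + 1 ∧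
      (∑ k ∈ Finset.Ioc j n, (n.choose k : ℝ) * p ^ k * (1 - p) ^ (n - k)) ≤ α₂} :=
    ⟨n + 1, fun j hj => hj.2.1⟩
  have huhat : uhat = n + 1 := by
    rw [hu]
    exact le_antisymm (csSup_le ⟨n + 1, hmemU⟩ fun j hj => hj.2.1) (le_csSup hbddU hmemU)
  have hXeU : ∀ ω, Xe ω uhat = ⊤ := fun ω => by rw [huhat]; exact hXetop ω
  -- lhat facts
  have hmemL : lhat ∈ {i : ℕ | i ≤ n ∧
      (∑ j ∈ Finset.range i, (n.choose j : ℝ) * p ^ j * (1 - p) ^ (n - j)) ≤ α₁} := by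
    rw [hl]
    exact Nat.sSup_mem ⟨0, ⟨Nat.zero_le n, by simpa using hα₁0⟩⟩ ⟨n, fun i hi => hi.1⟩
  obtain ⟨hlhat_le, hlsum⟩ := hmemL
  -- cdf facts
  have hcmono : Monotone (ProbabilityTheory.cdf μ) := ProbabilityTheory.monotone_cdf μ
  have hFc : ∀ x, F x = ProbabilityTheory.cdf μ x := fun x => by
    rw [hF, ProbabilityTheory.cdf_eq_real, measureReal_def]
  have hSne : ({x : ℝ | p ≤ F x}).Nonempty := by
    obtain ⟨x₀, hx₀⟩ :=
      ((ProbabilityTheory.tendsto_cdf_atTop μ).eventually (eventually_gt_nhds hp1)).exists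
    exact ⟨x₀, by rw [Set.mem_setOf_eq, hFc]; exact hx₀.le⟩
  have hSbdd : BddBelow {x : ℝ | p ≤ F x} := by
    obtain ⟨y, hy⟩ :=
      ((ProbabilityTheory.tendsto_cdf_atBot μ).eventually (eventually_lt_nhds hp0)).exists
    refine ⟨y, fun x hx => ?_⟩
    by_contra hxy
    push_neg at hxy
    have : ProbabilityTheory.cdf μ x ≤ ProbabilityTheory.cdf μ y := hcmono hxy.le
    rw [Set.mem_setOf_eq, hFc] at hx
    linarith
  have hpc : p ≤ ProbabilityTheory.cdf μ θp := by
    have hrc : ContinuousWithinAt (ProbabilityTheory.cdf μ) (Ici θp) θp :=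
      (ProbabilityTheory.cdf μ).right_continuous θp
    have htend : Filter.Tendsto (ProbabilityTheory.cdf μ) (nhdsWithin θp (Ioi θp))
        (nhds (ProbabilityTheory.cdf μ θp)) :=
      hrc.tendsto.mono_left (nhdsWithin_mono _ Ioi_subset_Ici_self)
    refine ge_of_tendsto htend ?_
    filter_upwards [self_mem_nhdsWithin] with x hx
    have hx' : sInf {x : ℝ | p ≤ F x} < x := hθp ▸ hx
    obtain ⟨y, hyS, hyx⟩ := (csInf_lt_iff hSbdd hSne).1 hx'
    rw [Set.mem_setOf_eq, hFc] at hyS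
    exact hyS.trans (hcmono hyx.le)
  set q : ENNReal := μ (Iic θp) with hqdef
  have hqc : q = ENNReal.ofReal (ProbabilityTheory.cdf μ θp) :=
    (ProbabilityTheory.ofReal_cdf μ θp).symm
  have hq1 : q ≤ 1 := prob_le_one
  have hqr : q.toReal = ProbabilityTheory.cdf μ θp := by
    rw [hqc, ENNReal.toReal_ofReal (ProbabilityTheory.cdf_nonneg μ θp)]
  have hpq : p ≤ q.toReal := hqr ▸ hpc
  have hqr1 : q.toReal ≤ 1 := hqr ▸ ProbabilityTheory.cdf_le_one μ θp
  -- trivial case lhat = 0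
  rcases Nat.eq_zero_or_pos lhat with hl0 | hlpos
  · have huniv : {ω : Ω | Xe ω lhat ≤ ((θp : ℝ) : EReal) ∧ ((θp : ℝ) : EReal) ≤ Xe ω uhat}
        = Set.univ := by
      refine Set.eq_univ_of_forall fun ω => ?_
      refine ⟨?_, by rw [hXeU ω]; exact le_top⟩
      rw [hl0, hXe0 ω]; exact bot_le
    rw [huniv, measure_univ, ENNReal.toReal_one]
    linarith
  · obtain ⟨m, rfl⟩ : ∃ m, lhat = m + 1 := ⟨lhat - 1, by omega⟩
    have hmn : m < n := by omega
    -- Bernoulli indicators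
    set g : ℝ → Bool := fun x => decide (x ≤ θp) with hg
    have hgmeas : Measurable g := by
      have : g = fun x => if x ≤ θp then true else false := by
        funext x; by_cases h : x ≤ θp <;> simp [hg, h]
      rw [this]
      exact Measurable.ite measurableSet_Iic measurable_const measurable_const
    set Y : Fin n → Ω → Bool := fun i ω => g (X i ω) with hY
    have hYmeas : ∀ i, Measurable (Y i) := fun i => hgmeas.comp (hXmeas i)
    have hYindep : ProbabilityTheory.iIndepFun Y volume :=
      hXindep.comp (fun _ => g) (fun _ => hgmeas)
    have hqY : ∀ i, volume {ω | Y i ω = true} = q := by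
      intro i
      have hpre : {ω | Y i ω = true} = X i ⁻¹' (Iic θp) := by
        ext ω; simp [hY, hg]
      rw [hpre, ← Measure.map_apply (hXmeas i) measurableSet_Iic, hXlaw i]
    have hcount := prob_count_ge n Y hYmeas hYindep q hqY (m + 1)
    -- inclusion
    have hsub : {ω : Ω | m + 1 ≤ (Finset.univ.filter (fun i => Y i ω = true)).card}
        ⊆ {ω : Ω | Xe ω (m+1) ≤ ((θp : ℝ) : EReal) ∧ ((θp : ℝ) : EReal) ≤ Xe ω uhat} := by
      intro ω hω
      refine ⟨?_, by rw [hXeU ω]; exact le_top⟩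
      obtain ⟨σ, hσ⟩ := hXordPerm ω
      have hcard : (Finset.univ.filter (fun k : Fin n => Xord ω k ≤ θp)).card
          = (Finset.univ.filter (fun i => Y i ω = true)).card := by
        refine Finset.card_bij (fun k _ => σ k) ?_ ?_ ?_
        · intro k hk
          simp only [Finset.mem_filter, Finset.mem_univ, true_and] at hk ⊢
          simp [hY, hg, ← hσ k, hk]
        · intro a ha b hb hab
          exact σ.injective hab
        · intro i hi
          simp only [Finset.mem_filter, Finset.mem_univ, true_and] at hi
          refine ⟨σ.symm i, ?_, by simp⟩
          simp only [Finset.mem_filter, Finset.mem_univ, true_and]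
          have : Xord ω (σ.symm i) = X i ω := by rw [hσ (σ.symm i), Equiv.apply_symm_apply]
          rw [this]
          simpa [hY, hg] using hi
      have hT : m + 1 ≤ (Finset.univ.filter (fun k : Fin n => Xord ω k ≤ θp)).card := by
        rw [hcard]; exact hω
      have hex : ∃ k ∈ Finset.univ.filter (fun k : Fin n => Xord ω k ≤ θp), m ≤ (k : ℕ) := by
        by_contra hcon
        push_neg at hcon
        have hle : (Finset.univ.filter (fun k : Fin n => Xord ω k ≤ θp)).card
            ≤ (Finset.range m).card := by
          refine Finset.card_le_card_of_injOn (fun k => (k : ℕ)) ?_ ?_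
          · intro k hk
            simp only [Finset.mem_coe, Finset.mem_range]
            exact hcon k hk
          · intro a _ b _ hab
            exact Fin.val_injective hab
        rw [Finset.card_range] at hle
        omega
      obtain ⟨k, hk, hmk⟩ := hex
      simp only [Finset.mem_filter, Finset.mem_univ, true_and] at hk
      have hmono : Xord ω ⟨m, hmn⟩ ≤ Xord ω k := hXordMono ω (show (⟨m, hmn⟩ : Fin n) ≤ k from hmk)
      have hXeeq : Xe ω (m + 1) = ((Xord ω ⟨m, hmn⟩ : ℝ) : EReal) := by
        have := hXe ω ⟨m, hmn⟩
        simpa using this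
      rw [hXeeq]
      exact_mod_cast hmono.trans hk
    -- put it together
    have hvol : volume {ω : Ω | m + 1 ≤ (Finset.univ.filter (fun i => Y i ω = true)).card}
        ≤ volume {ω : Ω | Xe ω (m+1) ≤ ((θp : ℝ) : EReal) ∧ ((θp : ℝ) : EReal) ≤ Xe ω uhat} :=
      measure_mono hsub
    have hqtop : q ≠ ⊤ := (hq1.trans_lt (by norm_num)).ne
    have hterm_ne : ∀ k ∈ Finset.Icc (m+1) n,
        (n.choose k : ENNReal) * q ^ k * (1 - q) ^ (n - k) ≠ ⊤ := by
      intro k _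
      exact ENNReal.mul_ne_top (ENNReal.mul_ne_top (ENNReal.natCast_ne_top _)
        (ENNReal.pow_ne_top hqtop)) (ENNReal.pow_ne_top (ENNReal.sub_ne_top (by norm_num)))
    have htoReal : (volume {ω : Ω | m + 1 ≤ (Finset.univ.filter
        (fun i => Y i ω = true)).card}).toReal = binomTail n (m+1) q.toReal := by
      rw [hcount, ENNReal.toReal_sum hterm_ne]
      refine Finset.sum_congr rfl fun k _ => ?_
      rw [ENNReal.toReal_mul, ENNReal.toReal_mul, ENNReal.toReal_pow, ENNReal.toReal_pow,
        ENNReal.toReal_natCast, ENNReal.toReal_sub_of_le hq1 (by norm_num), ENNReal.toReal_one]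
    have hfinal : binomTail n (m+1) q.toReal
        ≤ (volume {ω : Ω | Xe ω (m+1) ≤ ((θp : ℝ) : EReal)
            ∧ ((θp : ℝ) : EReal) ≤ Xe ω uhat}).toReal := by
      rw [← htoReal]
      exact ENNReal.toReal_le_toReal ((measure_lt_top _ _).ne) ((measure_lt_top _ _).ne) |>.mpr hvol
    have h1 : binomTail n (m+1) p ≤ binomTail n (m+1) q.toReal :=
      binomTail_mono n (m+1) hp0.le hpq hqr1
    have h2 : binomTail n (m+1) p
        = 1 - ∑ j ∈ Finset.range (m+1), (n.choose j : ℝ) * p ^ j * (1 - p) ^ (n - j) :=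
      binomTail_eq_one_sub n (m+1) (by omega) p
    have h3 : 1 - α₁ ≤ binomTail n (m+1) p := by rw [h2]; linarith
    linarith [hfinal, h1, h3]
end

section
/- Let {V_n} and {W_n} be sequences of random variables such that W_n = O_p(1) and for every y ∈ ℝ and every ε > 0: P(V_n ≤ y, W_n ≥ y + ε) → 0 and P(V_n ≥ y + ε, W_n ≤ y) → 0. Then V_n − W_n → 0 in probability. -/
open MeasureTheory Filter

/-- If `W_n = O_p(1)` and for every `y` and `ε > 0`,
`P(V_n ≤ y, W_n ≥ y + ε) → 0` and `P(V_n ≥ y + ε, W_n ≤ y) → 0`,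
then `V_n − W_n → 0` in probability. -/
theorem Vn_minus_Wn_tendsto_zero_in_probability
    {Ω : Type*} [MeasureSpace Ω] [IsProbabilityMeasure (volume : Measure Ω)]
    (V W : ℕ → Ω → ℝ)
    (hVmeas : ∀ n, Measurable (V n)) (hWmeas : ∀ n, Measurable (W n))
    (hWtight : ∀ δ : ℝ, 0 < δ → ∃ M : ℝ,
        ∀ n, (volume {ω : Ω | M < |W n ω|}).toReal < δ)
    (hcond1 : ∀ y : ℝ, ∀ ε : ℝ, 0 < ε →
        Tendsto (fun n => (volume {ω : Ω | V n ω ≤ y ∧ y + ε ≤ W n ω}).toReal)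
          atTop (nhds 0))
    (hcond2 : ∀ y : ℝ, ∀ ε : ℝ, 0 < ε →
        Tendsto (fun n => (volume {ω : Ω | y + ε ≤ V n ω ∧ W n ω ≤ y}).toReal)
          atTop (nhds 0)) :
    ∀ ε : ℝ, 0 < ε →
      Tendsto (fun n => (volume {ω : Ω | ε < |V n ω - W n ω|}).toReal)
        atTop (nhds 0) := by
  intro ε hε
  have hε2 : 0 < ε / 2 := by linarith
  rw [Metric.tendsto_atTop]
  intro δ hδ
  obtain ⟨M, hM⟩ := hWtight (δ / 2) (by linarith)
  set k : ℕ := ⌈4 * M / ε⌉₊ with hkdef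
  set c : ℝ := δ / (4 * (k + 1)) with hcdef
  have hcpos : 0 < c := by positivity
  set A : ℕ → ℕ → Set Ω := fun n j =>
      {ω | (-M + (j : ℝ) * (ε / 2) + ε / 2) + ε / 2 ≤ V n ω ∧
        W n ω ≤ -M + (j : ℝ) * (ε / 2) + ε / 2} with hA
  set B : ℕ → ℕ → Set Ω := fun n j =>
      {ω | V n ω ≤ -M + (j : ℝ) * (ε / 2) - ε / 2 ∧
        (-M + (j : ℝ) * (ε / 2) - ε / 2) + ε / 2 ≤ W n ω} with hB
  have hev : ∀ᶠ n in atTop, ∀ j ∈ Finset.range (k + 1),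
      (volume (A n j)).toReal < c ∧ (volume (B n j)).toReal < c := by
    rw [eventually_all_finset]
    intro j _
    exact ((hcond2 (-M + (j : ℝ) * (ε / 2) + ε / 2) (ε / 2) hε2).eventually_lt_const
        hcpos).and
      ((hcond1 (-M + (j : ℝ) * (ε / 2) - ε / 2) (ε / 2) hε2).eventually_lt_const hcpos)
  obtain ⟨N, hN⟩ := eventually_atTop.mp hev
  refine ⟨N, fun n hn => ?_⟩
  have hbnd := hN n hn
  -- inclusion
  have hsub : {ω : Ω | ε < |V n ω - W n ω|} ⊆
      {ω : Ω | M < |W n ω|} ∪ ⋃ j ∈ Finset.range (k + 1), (A n j ∪ B n j) := by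
    intro ω hω
    simp only [Set.mem_setOf_eq] at hω
    by_cases hw : M < |W n ω|
    · exact Or.inl hw
    · push_neg at hw
      right
      obtain ⟨hw1, hw2⟩ := abs_le.mp hw
      set w := W n ω with hwdef
      set j : ℕ := ⌊(w + M) / (ε / 2)⌋₊ with hjdef
      have hxnn : 0 ≤ (w + M) / (ε / 2) := div_nonneg (by linarith) (le_of_lt hε2)
      have hjk : j ≤ k := by
        have h2 : (w + M) / (ε / 2) ≤ 4 * M / ε := by
          rw [div_le_div_iff₀ hε2 hε]
          nlinarith
        calc j ≤ ⌊4 * M / ε⌋₊ := Nat.floor_le_floor h2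
          _ ≤ ⌈4 * M / ε⌉₊ := Nat.floor_le_ceil _
      have hylo : -M + (j : ℝ) * (ε / 2) ≤ w := by
        have h3 := Nat.floor_le hxnn
        rw [le_div_iff₀ hε2] at h3
        rw [← hjdef] at h3
        linarith
      have hyhi : w < -M + (j : ℝ) * (ε / 2) + ε / 2 := by
        have h4 := Nat.lt_floor_add_one ((w + M) / (ε / 2))
        rw [div_lt_iff₀ hε2] at h4
        rw [← hjdef] at h4
        nlinarith
      refine Set.mem_iUnion₂.mpr ⟨j, Finset.mem_range.mpr (Nat.lt_succ_of_le hjk), ?_⟩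
      rcases abs_cases (V n ω - W n ω) with ⟨habs, _⟩ | ⟨habs, _⟩
      · left
        rw [habs] at hω
        exact ⟨by linarith, by linarith⟩
      · right
        rw [habs] at hω
        exact ⟨by linarith, by linarith⟩
  have key : volume {ω : Ω | ε < |V n ω - W n ω|} ≤
      volume {ω : Ω | M < |W n ω|} +
        ∑ j ∈ Finset.range (k + 1), (volume (A n j) + volume (B n j)) := by
    calc volume {ω : Ω | ε < |V n ω - W n ω|}
        ≤ volume ({ω : Ω | M < |W n ω|} ∪ ⋃ j ∈ Finset.range (k + 1), (A n j ∪ B n j)) :=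
          measure_mono hsub
      _ ≤ volume {ω : Ω | M < |W n ω|} +
            volume (⋃ j ∈ Finset.range (k + 1), (A n j ∪ B n j)) := measure_union_le _ _
      _ ≤ volume {ω : Ω | M < |W n ω|} +
            ∑ j ∈ Finset.range (k + 1), volume (A n j ∪ B n j) :=
          add_le_add le_rfl (measure_biUnion_finset_le _ _)
      _ ≤ _ := add_le_add le_rfl (Finset.sum_le_sum fun j _ => measure_union_le _ _)
  have hfin : (volume {ω : Ω | M < |W n ω|} +
      ∑ j ∈ Finset.range (k + 1), (volume (A n j) + volume (B n j))) ≠ ⊤ := by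
    refine ENNReal.add_ne_top.mpr ⟨measure_ne_top _ _, ?_⟩
    refine (ENNReal.sum_lt_top.mpr fun j _ => ?_).ne
    exact ENNReal.add_lt_top.mpr ⟨measure_lt_top _ _, measure_lt_top _ _⟩
  have hR : (volume {ω : Ω | ε < |V n ω - W n ω|}).toReal ≤
      (volume {ω : Ω | M < |W n ω|}).toReal +
        ∑ j ∈ Finset.range (k + 1),
          ((volume (A n j)).toReal + (volume (B n j)).toReal) := by
    have h5 := ENNReal.toReal_mono hfin key
    rw [ENNReal.toReal_add (measure_ne_top _ _)
        (by
          refine (ENNReal.sum_lt_top.mpr fun j _ => ?_).ne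
          exact ENNReal.add_lt_top.mpr ⟨measure_lt_top _ _, measure_lt_top _ _⟩),
      ENNReal.toReal_sum (fun j _ =>
        (ENNReal.add_lt_top.mpr ⟨measure_lt_top _ _, measure_lt_top _ _⟩).ne)] at h5
    convert h5 using 2
    refine Finset.sum_congr rfl fun j _ => ?_
    rw [ENNReal.toReal_add (measure_ne_top _ _) (measure_ne_top _ _)]
  rw [Real.dist_eq, sub_zero, abs_of_nonneg ENNReal.toReal_nonneg]
  have hsum : ∑ j ∈ Finset.range (k + 1),
      ((volume (A n j)).toReal + (volume (B n j)).toReal) ≤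
      ∑ j ∈ Finset.range (k + 1), (2 * c) := by
    refine Finset.sum_le_sum fun j hj => ?_
    have := hbnd j hj
    linarith [this.1, this.2]
  rw [Finset.sum_const, Finset.card_range, nsmul_eq_mul] at hsum
  have hcval : ((k : ℝ) + 1) * (2 * c) = δ / 2 := by
    rw [hcdef]
    field_simp
    ring
  have := hM n
  push_cast at hsum
  linarith
end
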